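/- arXiv:2506.16646 — 6 statements merged into one kernel-verified Lean document; each statement's English description precedes it below -/
import Mathlib

section
/- Proposition 1 (existence part): Suppose the measurement operators form a POVM, i.e. each A_i is Hermitian PSD and Σ_{i=1}^m A_i = I, and suppose the frequencies are generated by a density matrix ρ0, i.e. f_i = Re(tr(A_i ρ0)) for every i = 1,…,m. Then for every density matrix ρ with Re(tr(A_i ρ)) > 0 for every i with f_i > 0, one has L(ρ0) ≤ L(ρ); that is, ρ0 minimizes the negative log-likelihood over density matrices. -/
/-! Because the `A i` sum to the identity, `i ↦ Re tr(A i ρ)` is a probability vector for every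
density matrix `ρ`, and it is nonnegative since `tr(A ρ) = tr(B ρ Bᴴ)` for `A = Bᴴ B`. The claim is
then Gibbs' inequality `∑ f log p ≤ ∑ f log f` between the distributions `f` of `ρ0` and `p` of
`ρ`, which follows termwise from `log x ≤ x - 1`. -/

open Matrix BigOperators ComplexOrder

/-- Negative log-likelihood `L(ρ) = −Σ_i f_i · log(Re(tr(A_i ρ)))`. -/
noncomputable def negLogLik {d m : ℕ} (A : Fin m → Matrix (Fin d) (Fin d) ℂ)
    (f : Fin m → ℝ) (ρ : Matrix (Fin d) (Fin d) ℂ) : ℝ :=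
  -∑ i, f i * Real.log ((A i * ρ).trace.re)

open scoped MatrixOrder in
lemma Matrix.PosSemidef.trace_mul_nonneg {n 𝕜 : Type*} [Fintype n] [RCLike 𝕜]
    {P Q : Matrix n n 𝕜} (hP : P.PosSemidef) (hQ : Q.PosSemidef) : 0 ≤ (P * Q).trace := by
  classical
  obtain ⟨B, rfl⟩ := CStarAlgebra.nonneg_iff_eq_star_mul_self.mp hP.nonneg
  rw [star_eq_conjTranspose, mul_assoc, trace_mul_comm]
  exact (hQ.mul_mul_conjTranspose_same B).trace_nonneg

lemma Matrix.trace_sum_mul_of_sum_eq_one {ι n R : Type*} [Fintype ι] [Fintype n]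
    [DecidableEq n] [Semiring R] {A : ι → Matrix n n R} (hA : ∑ i, A i = 1)
    (σ : Matrix n n R) : ∑ i, (A i * σ).trace = σ.trace := by
  rw [← trace_sum, ← Finset.sum_mul, hA, one_mul]

lemma Real.mul_log_sub_mul_log_le {f p : ℝ} (hf : 0 ≤ f) (hp : 0 ≤ p) (hpos : 0 < f → 0 < p) :
    f * Real.log p - f * Real.log f ≤ p - f := by
  rcases hf.eq_or_lt with rfl | hf
  · simpa using hp
  have hp := hpos hf
  have hlog := Real.log_le_sub_one_of_pos (div_pos hp hf)
  rw [Real.log_div hp.ne' hf.ne'] at hlog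
  calc f * Real.log p - f * Real.log f = f * (Real.log p - Real.log f) := by ring
    _ ≤ f * (p / f - 1) := mul_le_mul_of_nonneg_left hlog hf.le
    _ = p - f := by field_simp

lemma Real.sum_mul_log_le_sum_mul_log_self {ι : Type*} {s : Finset ι} {f p : ι → ℝ}
    (hf : ∀ i ∈ s, 0 ≤ f i) (hp : ∀ i ∈ s, 0 ≤ p i) (hpos : ∀ i ∈ s, 0 < f i → 0 < p i)
    (hsum : ∑ i ∈ s, p i ≤ ∑ i ∈ s, f i) :
    ∑ i ∈ s, f i * Real.log (p i) ≤ ∑ i ∈ s, f i * Real.log (f i) := by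
  have h : ∑ i ∈ s, (f i * Real.log (p i) - f i * Real.log (f i)) ≤ ∑ i ∈ s, (p i - f i) :=
    Finset.sum_le_sum fun i hi => mul_log_sub_mul_log_le (hf i hi) (hp i hi) (hpos i hi)
  rw [Finset.sum_sub_distrib, Finset.sum_sub_distrib] at h
  linarith

theorem mle_existence_general {d m : ℕ}
    (A : Fin m → Matrix (Fin d) (Fin d) ℂ) (f : Fin m → ℝ)
    (hA : ∀ i, (A i).PosSemidef) (hAsum : ∑ i, A i = 1)
    (hf : ∀ i, 0 ≤ f i)
    (ρ0 : Matrix (Fin d) (Fin d) ℂ) (hρ0tr : ρ0.trace = 1)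
    (hdata : ∀ i, f i = ((A i * ρ0).trace).re) :
    ∀ ρ : Matrix (Fin d) (Fin d) ℂ, ρ.PosSemidef → ρ.trace = 1 →
      (∀ i, 0 < f i → 0 < ((A i * ρ).trace).re) →
      negLogLik A f ρ0 ≤ negLogLik A f ρ := by
  intro ρ hρ hρtr hpos
  have hprob : ∀ σ : Matrix (Fin d) (Fin d) ℂ, σ.trace = 1 → ∑ i, ((A i * σ).trace).re = 1 :=
    fun σ hσ => by rw [← Complex.re_sum, trace_sum_mul_of_sum_eq_one hAsum, hσ, Complex.one_re]
  have hf_sum : ∑ i, f i = 1 := by simpa only [← hdata] using hprob ρ0 hρ0tr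
  simp only [negLogLik, neg_le_neg_iff, ← hdata]
  refine Real.sum_mul_log_le_sum_mul_log_self (fun i _ => hf i)
    (fun i _ => (RCLike.nonneg_iff.mp ((hA i).trace_mul_nonneg hρ)).1)
    (fun i _ => hpos i) ?_
  rw [hprob ρ hρtr, hf_sum]

/-- Proposition 1 (existence part): if the frequencies are generated by a density
matrix `ρ0` and the `A i` form a POVM, then `ρ0` minimizes `L` over density matrices. -/
theorem mle_existence {d m : ℕ} (hd : 1 ≤ d) (hm : 1 ≤ m)
    (A : Fin m → Matrix (Fin d) (Fin d) ℂ) (f : Fin m → ℝ)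
    (hA : ∀ i, (A i).PosSemidef) (hAsum : ∑ i, A i = 1)
    (hf : ∀ i, 0 ≤ f i)
    (ρ0 : Matrix (Fin d) (Fin d) ℂ) (hρ0 : ρ0.PosSemidef) (hρ0tr : ρ0.trace = 1)
    (hdata : ∀ i, f i = ((A i * ρ0).trace).re) :
    ∀ ρ : Matrix (Fin d) (Fin d) ℂ, ρ.PosSemidef → ρ.trace = 1 →
      (∀ i, 0 < f i → 0 < ((A i * ρ).trace).re) →
      negLogLik A f ρ0 ≤ negLogLik A f ρ :=
  mle_existence_general A f hA hAsum hf ρ0 hρ0tr hdata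
end

section
/- Proposition 1 (uniqueness part): Suppose the measurement operators form a POVM, i.e. each A_i is Hermitian PSD and Σ_{i=1}^m A_i = I, that f_i = Re(tr(A_i ρ0)) for every i where ρ0 is a density matrix, and that the POVM is informationally complete, i.e. the real linear span of {A_1, …, A_m} is the whole real vector space of d × d Hermitian matrices. Then ρ0 is the unique minimizer of L over density matrices: any density matrix ρ with Re(tr(A_i ρ)) > 0 for every i with f_i > 0 and L(ρ) = L(ρ0) must equal ρ0. -/
/-!
Write `q i = Re tr(A i ρ)`; by positivity and `∑ A i = 1`, both `q` and `f` are probability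
vectors. `L(ρ) = L(ρ0)` says that the Kullback–Leibler divergence of `f` from `q` vanishes, so
`q = f` by the equality case of Gibbs' inequality. Then the real functional
`B ↦ Re tr(B (ρ - ρ0))` vanishes on every `A i`, hence on their span, which by informational
completeness contains the Hermitian matrix `ρ - ρ0`; so `tr((ρ - ρ0)ᴴ (ρ - ρ0)) = 0`.
-/

open Matrix BigOperators ComplexOrder

namespace Real

open InformationTheory

lemma mul_log_sub_log_sub_sub_eq_mul_klFun {p q : ℝ} (hp : 0 < p) (hq : 0 < q) :
    p * (log p - log q) - (p - q) = q * klFun (p / q) := by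
  rw [klFun_apply, log_div hp.ne' hq.ne']
  field_simp
  ring

variable {p q : ℝ}

lemma sub_le_mul_log_sub_log (hp : 0 ≤ p) (hq : 0 ≤ q) (hpq : 0 < p → 0 < q) :
    p - q ≤ p * (log p - log q) := by
  rcases hp.eq_or_lt with rfl | hp
  · simpa using hq
  have hq := hpq hp
  have := mul_log_sub_log_sub_sub_eq_mul_klFun hp hq
  nlinarith [klFun_nonneg (div_pos hp hq).le]

lemma eq_of_mul_log_sub_log_eq_sub (hp : 0 ≤ p) (hpq : 0 < p → 0 < q)
    (h : p * (log p - log q) = p - q) : p = q := by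
  rcases hp.eq_or_lt with rfl | hp
  · simp only [zero_mul, zero_sub, zero_eq_neg] at h
    exact h.symm
  have hq := hpq hp
  have hkl : klFun (p / q) = 0 := by
    have := mul_log_sub_log_sub_sub_eq_mul_klFun hp hq
    rw [h, sub_self, zero_eq_mul] at this
    exact this.resolve_left hq.ne'
  rw [klFun_eq_zero_iff (div_pos hp hq).le, div_eq_one_iff_eq hq.ne'] at hkl
  exact hkl

/-- Equality case of Gibbs' inequality. -/
theorem eq_of_sum_mul_log_eq {ι : Type*} [Fintype ι] {p q : ι → ℝ} (hp : ∀ i, 0 ≤ p i)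
    (hq : ∀ i, 0 ≤ q i) (hpq : ∀ i, 0 < p i → 0 < q i) (hsum : ∑ i, p i = ∑ i, q i)
    (hlog : ∑ i, p i * log (q i) = ∑ i, p i * log (p i)) : p = q := by
  have hgap : ∑ i, (p i * (log (p i) - log (q i)) - (p i - q i)) = 0 := by
    simp only [mul_sub, Finset.sum_sub_distrib, hlog, hsum, sub_self]
  funext i
  refine eq_of_mul_log_sub_log_eq_sub (hp i) (hpq i) (sub_eq_zero.mp ?_)
  refine (Finset.sum_eq_zero_iff_of_nonneg fun j _ => ?_).mp hgap i (Finset.mem_univ i)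
  exact sub_nonneg.mpr (sub_le_mul_log_sub_log (hp j) (hq j) (hpq j))

end Real

namespace Matrix

variable {n 𝕜 : Type*} [Fintype n] [RCLike 𝕜]

open scoped MatrixOrder in
lemma PosSemidef.trace_mul_nonneg_s1 [DecidableEq n] {A B : Matrix n n 𝕜} (hA : A.PosSemidef)
    (hB : B.PosSemidef) : 0 ≤ (A * B).trace := by
  have hS : (CFC.sqrt B).IsHermitian := (CFC.sqrt_nonneg B).posSemidef.isHermitian
  calc 0 ≤ ((CFC.sqrt B)ᴴ * A * CFC.sqrt B).trace :=
        (hA.conjTranspose_mul_mul_same _).trace_nonneg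
    _ = (A * B).trace := by
        rw [hS.eq, trace_mul_cycle, CFC.sqrt_mul_sqrt_self B hB.nonneg, trace_mul_comm]

lemma sum_trace_mul_eq_trace_of_sum_eq_one {R ι : Type*} [NonAssocSemiring R] [DecidableEq n]
    [Fintype ι] {A : ι → Matrix n n R} (hA : ∑ i, A i = 1) (ρ : Matrix n n R) :
    ∑ i, (A i * ρ).trace = ρ.trace := by
  rw [← trace_sum, ← Finset.sum_mul, hA, one_mul]

lemma IsHermitian.eq_zero_of_re_trace_mul_eq_zero {S : Set (Matrix n n 𝕜)} {M : Matrix n n 𝕜}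
    (hM : M.IsHermitian) (hMS : M ∈ Submodule.span ℝ S)
    (h : ∀ B ∈ S, RCLike.re (B * M).trace = 0) : M = 0 := by
  let φ : Matrix n n 𝕜 →ₗ[ℝ] ℝ :=
    RCLike.reLm ∘ₗ traceLinearMap n ℝ 𝕜 ∘ₗ LinearMap.mulRight ℝ M
  have hφ : Submodule.span ℝ S ≤ LinearMap.ker φ := Submodule.span_le.mpr h
  have hre : RCLike.re (Mᴴ * M).trace = 0 := by
    rw [hM.eq]; exact hφ hMS
  have him : RCLike.im (Mᴴ * M).trace = 0 :=
    (RCLike.nonneg_iff.mp (posSemidef_conjTranspose_mul_self M).trace_nonneg).2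
  exact trace_conjTranspose_mul_self_eq_zero_iff.mp
    (RCLike.ext (by simpa using hre) (by simpa using him))

end Matrix

theorem mle_uniqueness_general {d m : ℕ}
    (A : Fin m → Matrix (Fin d) (Fin d) ℂ) (f : Fin m → ℝ)
    (hA : ∀ i, (A i).PosSemidef) (hAsum : ∑ i, A i = 1)
    (hf : ∀ i, 0 ≤ f i)
    (ρ0 : Matrix (Fin d) (Fin d) ℂ) (hρ0 : ρ0.PosSemidef) (hρ0tr : ρ0.trace = 1)
    (hdata : ∀ i, f i = ((A i * ρ0).trace).re)
    (hIC : ((Submodule.span ℝ (Set.range A) : Submodule ℝ (Matrix (Fin d) (Fin d) ℂ)) :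
        Set (Matrix (Fin d) (Fin d) ℂ)) = {B | B.IsHermitian}) :
    ∀ ρ : Matrix (Fin d) (Fin d) ℂ, ρ.PosSemidef → ρ.trace = 1 →
      (∀ i, 0 < f i → 0 < ((A i * ρ).trace).re) →
      negLogLik A f ρ = negLogLik A f ρ0 →
      ρ = ρ0 := by
  intro ρ hρ hρtr hpos hL
  set q : Fin m → ℝ := fun i => (A i * ρ).trace.re
  have hq : ∀ i, 0 ≤ q i := fun i => (Complex.nonneg_iff.mp ((hA i).trace_mul_nonneg_s1 hρ)).1
  have hsum : ∑ i, f i = ∑ i, q i := by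
    simp only [q, hdata, ← Complex.re_sum]
    rw [sum_trace_mul_eq_trace_of_sum_eq_one hAsum, sum_trace_mul_eq_trace_of_sum_eq_one hAsum,
      hρtr, hρ0tr]
  have hlog : ∑ i, f i * Real.log (q i) = ∑ i, f i * Real.log (f i) := by
    simpa [negLogLik, ← hdata] using hL
  have hfq : f = q := Real.eq_of_sum_mul_log_eq hf hq hpos hsum hlog
  have hΔ : (ρ - ρ0).IsHermitian := hρ.isHermitian.sub hρ0.isHermitian
  refine sub_eq_zero.mp (hΔ.eq_zero_of_re_trace_mul_eq_zero (hIC.ge hΔ) ?_)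
  rintro _ ⟨i, rfl⟩
  simp [mul_sub, trace_sub, ← hdata, ← congrFun hfq i, q]

/-- Proposition 1 (uniqueness part): with an informationally complete POVM and
frequencies generated by the density matrix `ρ0`, the state `ρ0` is the unique
minimizer of `L` over density matrices. -/
theorem mle_uniqueness {d m : ℕ} (hd : 1 ≤ d) (hm : 1 ≤ m)
    (A : Fin m → Matrix (Fin d) (Fin d) ℂ) (f : Fin m → ℝ)
    (hA : ∀ i, (A i).PosSemidef) (hAsum : ∑ i, A i = 1)
    (hf : ∀ i, 0 ≤ f i)
    (ρ0 : Matrix (Fin d) (Fin d) ℂ) (hρ0 : ρ0.PosSemidef) (hρ0tr : ρ0.trace = 1)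
    (hdata : ∀ i, f i = ((A i * ρ0).trace).re)
    (hIC : ((Submodule.span ℝ (Set.range A) : Submodule ℝ (Matrix (Fin d) (Fin d) ℂ)) :
        Set (Matrix (Fin d) (Fin d) ℂ)) = {B | B.IsHermitian}) :
    ∀ ρ : Matrix (Fin d) (Fin d) ℂ, ρ.PosSemidef → ρ.trace = 1 →
      (∀ i, 0 < f i → 0 < ((A i * ρ).trace).re) →
      negLogLik A f ρ = negLogLik A f ρ0 →
      ρ = ρ0 :=
  mle_uniqueness_general A f hA hAsum hf ρ0 hρ0 hρ0tr hdata hIC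
end

section
/- Theorem (unconstrained MLE equivalence): Set λ = Σ_{i=1}^m f_i and assume λ > 0. Let D be the set of Hermitian PSD matrices σ with Re(tr(A_i σ)) > 0 for every i with f_i > 0, and let D₁ = {σ ∈ D : tr(σ) = 1}. Then for ρ ∈ D the following are equivalent: (i) tr(ρ) = 1 and L(ρ) ≤ L(σ) for every σ ∈ D₁; (ii) L(ρ) + λ·Re(tr(ρ)) ≤ L(σ) + λ·Re(tr(σ)) for every σ ∈ D. That is, the trace-one constrained maximum-likelihood problem and the trace-penalized problem with multiplier λ = Σ f_i have exactly the same minimizers. -/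
open Matrix BigOperators ComplexOrder

/-! The likelihood is logarithmically homogeneous, `L (c • σ) = L σ - λ log c` for `c > 0`.
Writing `s = Re tr σ`, this gives `L σ + λ s = L (s⁻¹ • σ) + λ + λ (s - 1 - log s)`, and
`s - 1 - log s ≥ 0` with equality only at `s = 1`. Hence the penalized objective at any `σ ∈ D`
dominates its value at the normalization `s⁻¹ • σ ∈ D₁`, strictly unless `σ ∈ D₁`, where the two
objectives differ by the constant `λ`. -/

section ScaleEquivariant

variable {E : Type*} [SMul ℝ E] {D : Set E} {L τ : E → ℝ} {lam : ℝ}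

theorem penalized_eq_normalized_add
    (hL : ∀ x ∈ D, ∀ c : ℝ, 0 < c → L (c • x) = L x - lam * Real.log c)
    {x : E} (hx : x ∈ D) {s : ℝ} (hs : 0 < s) :
    L x + lam * s = L (s⁻¹ • x) + lam + lam * (s - 1 - Real.log s) := by
  rw [hL x hx s⁻¹ (inv_pos.2 hs), Real.log_inv]
  ring

theorem constrained_min_iff_penalized_min
    (hD : ∀ x ∈ D, ∀ c : ℝ, 0 < c → c • x ∈ D)
    (hL : ∀ x ∈ D, ∀ c : ℝ, 0 < c → L (c • x) = L x - lam * Real.log c)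
    (hτ : ∀ (c : ℝ) (x : E), τ (c • x) = c * τ x) (hτD : ∀ x ∈ D, 0 < τ x)
    (hlam : 0 < lam) {ρ : E} (hρ : ρ ∈ D) :
    (τ ρ = 1 ∧ ∀ σ ∈ D, τ σ = 1 → L ρ ≤ L σ) ↔
      ∀ σ ∈ D, L ρ + lam * τ ρ ≤ L σ + lam * τ σ := by
  have normalize_mem : ∀ σ ∈ D, (τ σ)⁻¹ • σ ∈ D := fun σ hσ => hD σ hσ _ (inv_pos.2 (hτD σ hσ))
  have τ_normalize : ∀ σ ∈ D, τ ((τ σ)⁻¹ • σ) = 1 := fun σ hσ => by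
    rw [hτ, inv_mul_cancel₀ (hτD σ hσ).ne']
  constructor
  · rintro ⟨hρ1, hmin⟩ σ hσ
    have hs := hτD σ hσ
    rw [penalized_eq_normalized_add hL hσ hs, hρ1, mul_one]
    have := hmin _ (normalize_mem σ hσ) (τ_normalize σ hσ)
    nlinarith [Real.log_le_sub_one_of_pos hs]
  · intro hmin
    have hr := hτD ρ hρ
    have hρ1 : τ ρ = 1 := by
      by_contra hne
      have := hmin _ (normalize_mem ρ hρ)
      rw [penalized_eq_normalized_add hL hρ hr, τ_normalize ρ hρ, mul_one] at this
      nlinarith [mul_lt_mul_of_pos_left (Real.log_lt_sub_one_of_pos hr hne) hlam]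
    refine ⟨hρ1, fun σ hσ hσ1 => ?_⟩
    simpa [hρ1, hσ1] using hmin σ hσ

end ScaleEquivariant

theorem Matrix.PosSemidef.trace_eq_one_iff {n : Type*} [Fintype n] {σ : Matrix n n ℂ}
    (hσ : σ.PosSemidef) : σ.trace = 1 ↔ σ.trace.re = 1 := by
  rw [Complex.eq_re_of_ofReal_le (r := 0) (z := σ.trace) (by exact_mod_cast hσ.trace_nonneg)]
  simp [Complex.ext_iff]

theorem Matrix.PosSemidef.trace_re_pos {n : Type*} [Fintype n] {σ : Matrix n n ℂ}
    (hσ : σ.PosSemidef) (hσ0 : σ ≠ 0) : 0 < σ.trace.re :=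
  (Complex.pos_iff.mp (hσ.trace_nonneg.lt_of_ne' (mt hσ.trace_eq_zero_iff.mp hσ0))).1

section MLE

variable {d m : ℕ} (A : Fin m → Matrix (Fin d) (Fin d) ℂ) (f : Fin m → ℝ)

def mleDomain : Set (Matrix (Fin d) (Fin d) ℂ) :=
  {σ | σ.PosSemidef ∧ ∀ i, 0 < f i → 0 < (A i * σ).trace.re}

theorem re_trace_mul_smul (B σ : Matrix (Fin d) (Fin d) ℂ) (c : ℝ) :
    (B * c • σ).trace.re = c * (B * σ).trace.re := by
  simp [trace_smul]

theorem smul_mem_mleDomain {σ : Matrix (Fin d) (Fin d) ℂ} (hσ : σ ∈ mleDomain A f)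
    {c : ℝ} (hc : 0 < c) : c • σ ∈ mleDomain A f := by
  refine ⟨hσ.1.smul hc.le, fun i hi => ?_⟩
  rw [re_trace_mul_smul]
  exact mul_pos hc (hσ.2 i hi)

theorem trace_re_pos_of_mem_mleDomain {i : Fin m} (hi : 0 < f i) {σ : Matrix (Fin d) (Fin d) ℂ}
    (hσ : σ ∈ mleDomain A f) : 0 < σ.trace.re := by
  refine hσ.1.trace_re_pos fun h0 => ?_
  simpa [h0] using hσ.2 i hi

theorem negLogLik_smul {σ : Matrix (Fin d) (Fin d) ℂ}
    (hσ : ∀ i, f i ≠ 0 → (A i * σ).trace.re ≠ 0) {c : ℝ} (hc : c ≠ 0) :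
    negLogLik A f (c • σ) = negLogLik A f σ - (∑ i, f i) * Real.log c := by
  have term : ∀ i, f i * Real.log (A i * c • σ).trace.re
      = f i * Real.log c + f i * Real.log (A i * σ).trace.re := fun i => by
    rw [re_trace_mul_smul]
    by_cases hfi : f i = 0
    · simp [hfi]
    · rw [Real.log_mul hc (hσ i hfi), mul_add]
  simp only [negLogLik, term, Finset.sum_add_distrib, Finset.sum_mul]
  ring

theorem negLogLik_smul_of_mem_mleDomain (hf : ∀ i, 0 ≤ f i) {σ : Matrix (Fin d) (Fin d) ℂ}
    (hσ : σ ∈ mleDomain A f) {c : ℝ} (hc : 0 < c) :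
    negLogLik A f (c • σ) = negLogLik A f σ - (∑ i, f i) * Real.log c :=
  negLogLik_smul A f (fun i hi => (hσ.2 i ((hf i).lt_of_ne' hi)).ne') hc.ne'

end MLE

theorem unconstrained_mle_equivalence_general {d m : ℕ}
    (A : Fin m → Matrix (Fin d) (Fin d) ℂ) (f : Fin m → ℝ)
    (hf : ∀ i, 0 ≤ f i)
    (hlam : 0 < ∑ i, f i)
    (ρ : Matrix (Fin d) (Fin d) ℂ) (hρ : ρ.PosSemidef)
    (hρpos : ∀ i, 0 < f i → 0 < ((A i * ρ).trace).re) :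
    (ρ.trace = 1 ∧
      ∀ σ : Matrix (Fin d) (Fin d) ℂ, σ.PosSemidef →
        (∀ i, 0 < f i → 0 < ((A i * σ).trace).re) → σ.trace = 1 →
        negLogLik A f ρ ≤ negLogLik A f σ)
    ↔
    (∀ σ : Matrix (Fin d) (Fin d) ℂ, σ.PosSemidef →
        (∀ i, 0 < f i → 0 < ((A i * σ).trace).re) →
        negLogLik A f ρ + (∑ i, f i) * (ρ.trace).re ≤
          negLogLik A f σ + (∑ i, f i) * (σ.trace).re) := by
  obtain ⟨i, hi⟩ : ∃ i, 0 < f i := by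
    by_contra! h
    exact hlam.not_ge (Finset.sum_nonpos fun i _ => h i)
  have key := constrained_min_iff_penalized_min (τ := fun σ => σ.trace.re)
    (fun σ hσ c hc => smul_mem_mleDomain A f hσ hc)
    (fun σ hσ c hc => negLogLik_smul_of_mem_mleDomain A f hf hσ hc)
    (fun c σ => by simp [trace_smul]) (fun σ hσ => trace_re_pos_of_mem_mleDomain A f hi hσ)
    hlam (show ρ ∈ mleDomain A f from ⟨hρ, hρpos⟩)
  simp only [mleDomain, Set.mem_ofPred_eq, and_imp] at key
  rw [hρ.trace_eq_one_iff, ← key]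
  refine and_congr_right fun _ => forall_congr' fun σ => forall_congr' fun hσ => ?_
  rw [hσ.trace_eq_one_iff]

/-- Theorem (unconstrained MLE equivalence): with `λ = Σ f_i > 0`, a point `ρ` of
`D = {σ PSD : Re(tr(A_i σ)) > 0 whenever f_i > 0}` minimizes `L` over
`D₁ = {σ ∈ D : tr σ = 1}` (and has trace one) iff it minimizes the trace-penalized
objective `L(·) + λ·Re(tr(·))` over `D`. -/
theorem unconstrained_mle_equivalence {d m : ℕ} (hd : 1 ≤ d) (hm : 1 ≤ m)
    (A : Fin m → Matrix (Fin d) (Fin d) ℂ) (f : Fin m → ℝ)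
    (hA : ∀ i, (A i).PosSemidef) (hf : ∀ i, 0 ≤ f i)
    (hlam : 0 < ∑ i, f i)
    (ρ : Matrix (Fin d) (Fin d) ℂ) (hρ : ρ.PosSemidef)
    (hρpos : ∀ i, 0 < f i → 0 < ((A i * ρ).trace).re) :
    (ρ.trace = 1 ∧
      ∀ σ : Matrix (Fin d) (Fin d) ℂ, σ.PosSemidef →
        (∀ i, 0 < f i → 0 < ((A i * σ).trace).re) → σ.trace = 1 →
        negLogLik A f ρ ≤ negLogLik A f σ)
    ↔
    (∀ σ : Matrix (Fin d) (Fin d) ℂ, σ.PosSemidef →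
        (∀ i, 0 < f i → 0 < ((A i * σ).trace).re) →
        negLogLik A f ρ + (∑ i, f i) * (ρ.trace).re ≤
          negLogLik A f σ + (∑ i, f i) * (σ.trace).re) :=
  unconstrained_mle_equivalence_general A f hf hlam ρ hρ hρpos
end

section
/- Unit trace at any minimizer of the penalized problem: Set λ = Σ_{i=1}^m f_i and assume λ > 0. Suppose ρ is Hermitian PSD with Re(tr(A_i ρ)) > 0 for every i with f_i > 0, and ρ minimizes the penalized objective σ ↦ L(σ) + λ·Re(tr(σ)) over all Hermitian PSD matrices σ with Re(tr(A_i σ)) > 0 for every i with f_i > 0. Then Re(tr(ρ)) = 1. -/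
open Matrix BigOperators ComplexOrder

/-!
Scaling a minimizer `ρ` by `t > 0` keeps it feasible and changes the objective by
`λ (t Re(tr ρ) - log t)` up to a constant, so `log t ≤ Re(tr ρ) (t - 1)` for all `t > 0`.
The only line `T (t - 1)` through `(1, 0)` that lies above `log` everywhere is its tangent,
`T = 1`.
-/

theorem Real.eq_one_of_forall_log_le_mul_sub_one {T : ℝ}
    (h : ∀ t : ℝ, 0 < t → Real.log t ≤ T * (t - 1)) : T = 1 := by
  have hT : 0 < T := by
    have := h 2 two_pos
    have := Real.log_pos one_lt_two
    linarith
  have hinv := h T⁻¹ (inv_pos.mpr hT)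
  rw [Real.log_inv, mul_sub, mul_inv_cancel₀ hT.ne'] at hinv
  by_contra hne
  have := Real.log_lt_sub_one_of_pos hT hne
  linarith

theorem Matrix.re_trace_mul_real_smul {n : Type*} [Fintype n] (A ρ : Matrix n n ℂ) (t : ℝ) :
    (A * (t • ρ)).trace.re = t * (A * ρ).trace.re := by
  rw [mul_smul_comm, trace_smul, Complex.smul_re, smul_eq_mul]

theorem negLogLik_real_smul {d m : ℕ} (A : Fin m → Matrix (Fin d) (Fin d) ℂ) (f : Fin m → ℝ)
    (hf : ∀ i, 0 ≤ f i) (ρ : Matrix (Fin d) (Fin d) ℂ)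
    (hρpos : ∀ i, 0 < f i → 0 < ((A i * ρ).trace).re) {t : ℝ} (ht : 0 < t) :
    negLogLik A f (t • ρ) = negLogLik A f ρ - (∑ i, f i) * Real.log t := by
  have hterm : ∀ i, f i * Real.log (A i * (t • ρ)).trace.re
      = f i * Real.log (A i * ρ).trace.re + f i * Real.log t := by
    intro i
    rcases (hf i).eq_or_lt with h0 | h0
    · simp [← h0]
    · rw [re_trace_mul_real_smul, Real.log_mul ht.ne' (hρpos i h0).ne']
      ring
  simp only [negLogLik, hterm, Finset.sum_add_distrib, Finset.sum_mul]
  ring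

theorem unit_trace_of_penalized_minimizer_general {d m : ℕ}
    (A : Fin m → Matrix (Fin d) (Fin d) ℂ) (f : Fin m → ℝ)
    (hf : ∀ i, 0 ≤ f i)
    (hlam : 0 < ∑ i, f i)
    (ρ : Matrix (Fin d) (Fin d) ℂ) (hρ : ρ.PosSemidef)
    (hρpos : ∀ i, 0 < f i → 0 < ((A i * ρ).trace).re)
    (hmin : ∀ σ : Matrix (Fin d) (Fin d) ℂ, σ.PosSemidef →
      (∀ i, 0 < f i → 0 < ((A i * σ).trace).re) →
      negLogLik A f ρ + (∑ i, f i) * (ρ.trace).re ≤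
        negLogLik A f σ + (∑ i, f i) * (σ.trace).re) :
    (ρ.trace).re = 1 := by
  refine Real.eq_one_of_forall_log_le_mul_sub_one fun t ht => ?_
  have hfeas : ∀ i, 0 < f i → 0 < (A i * (t • ρ)).trace.re := fun i hi => by
    rw [re_trace_mul_real_smul]
    exact mul_pos ht (hρpos i hi)
  have hscaled := hmin (t • ρ) (hρ.smul ht.le) hfeas
  rw [negLogLik_real_smul A f hf ρ hρpos ht, trace_smul, Complex.smul_re, smul_eq_mul] at hscaled
  have : (∑ i, f i) * Real.log t ≤ (∑ i, f i) * ((ρ.trace).re * (t - 1)) := by linarith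
  exact le_of_mul_le_mul_left this hlam

/-- Unit trace at any minimizer of the penalized problem: with `λ = Σ f_i > 0`,
any minimizer of `σ ↦ L(σ) + λ·Re(tr σ)` over Hermitian PSD matrices with
`Re(tr(A_i σ)) > 0` whenever `f_i > 0` has `Re(tr ρ) = 1`. -/
theorem unit_trace_of_penalized_minimizer {d m : ℕ} (hd : 1 ≤ d) (hm : 1 ≤ m)
    (A : Fin m → Matrix (Fin d) (Fin d) ℂ) (f : Fin m → ℝ)
    (hA : ∀ i, (A i).PosSemidef) (hf : ∀ i, 0 ≤ f i)
    (hlam : 0 < ∑ i, f i)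
    (ρ : Matrix (Fin d) (Fin d) ℂ) (hρ : ρ.PosSemidef)
    (hρpos : ∀ i, 0 < f i → 0 < ((A i * ρ).trace).re)
    (hmin : ∀ σ : Matrix (Fin d) (Fin d) ℂ, σ.PosSemidef →
      (∀ i, 0 < f i → 0 < ((A i * σ).trace).re) →
      negLogLik A f ρ + (∑ i, f i) * (ρ.trace).re ≤
        negLogLik A f σ + (∑ i, f i) * (σ.trace).re) :
    (ρ.trace).re = 1 :=
  unit_trace_of_penalized_minimizer_general A f hf hlam ρ hρ hρpos hmin
end

section
/- Proposition (a posteriori suboptimality bound): Let ρ̃ be a density matrix with Re(tr(A_i ρ̃)) > 0 for every i with f_i > 0. Define the Hermitian matrix G = −Σ_{i=1}^m (f_i / Re(tr(A_i ρ̃)))·A_i (the gradient of L at ρ̃; terms with f_i = 0 contribute the zero matrix), and set μ = max(0, −λ_min(G)), where λ_min(G) is the smallest eigenvalue of G. Then for every density matrix ρ with Re(tr(A_i ρ)) > 0 for every i with f_i > 0, one has L(ρ̃) ≤ L(ρ) + Re(tr(G ρ̃)) + μ; in particular L(ρ̃) − L⋆ ≤ Re(tr(G ρ̃)) + μ where L⋆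 is the infimum of L over such density matrices. -/
/-!
`L` is convex, being a nonnegative combination of `-log` of linear functionals, so it lies
above its tangent at `ρ̃`: termwise this is `log t ≤ t - 1`, and it gives
`L(ρ̃) ≤ L(ρ) + Re tr(G ρ̃) - Re tr(G ρ)`. Since `G - λ_min(G) • 1` is PSD and the trace of a
product of PSD matrices is nonnegative, `Re tr(G ρ) ≥ λ_min(G) ≥ -μ` for every density matrix `ρ`.
-/

open Matrix BigOperators ComplexOrder

open scoped MatrixOrder

namespace Matrix

variable {n : Type*} [Fintype n] [DecidableEq n]

lemma PosSemidef.re_trace_mul_nonneg {M N : Matrix n n ℂ} (hM : M.PosSemidef)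
    (hN : N.PosSemidef) : 0 ≤ (M * N).trace.re := by
  obtain ⟨B, rfl⟩ := CStarAlgebra.nonneg_iff_eq_star_mul_self.mp hN.nonneg
  rw [← mul_assoc, trace_mul_comm, ← mul_assoc]
  exact (Complex.nonneg_iff.mp (hM.mul_mul_conjTranspose_same B).trace_nonneg).1

lemma IsHermitian.algebraMap_iInf_eigenvalues_le {G : Matrix n n ℂ} (hG : G.IsHermitian) :
    algebraMap ℝ _ (⨅ j, hG.eigenvalues j) ≤ G := by
  rw [algebraMap_le_iff_le_spectrum (ha := hG), hG.spectrum_real_eq_range_eigenvalues]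
  rintro _ ⟨j, rfl⟩
  exact ciInf_le (Set.finite_range _).bddBelow j

lemma re_trace_mul_ge_of_algebraMap_le {G ρ : Matrix n n ℂ} {c : ℝ}
    (hcG : algebraMap ℝ _ c ≤ G) (hρ : ρ.PosSemidef) :
    c * ρ.trace.re ≤ (G * ρ).trace.re := by
  have := (le_iff.mp hcG).re_trace_mul_nonneg hρ
  rw [sub_mul, trace_sub, Complex.sub_re, Algebra.algebraMap_eq_smul_one, smul_mul, one_mul,
    trace_smul, Complex.real_smul, Complex.re_ofReal_mul] at this
  linarith

end Matrix

lemma mul_log_sub_mul_log_le {c x y : ℝ} (hc : 0 ≤ c) (hx : 0 < c → 0 < x)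
    (hy : 0 < c → 0 < y) : c * Real.log x - c * Real.log y ≤ c / y * (x - y) := by
  rcases hc.eq_or_lt with rfl | hc
  · simp
  have hx := hx hc
  have hy := hy hc
  have hlog := Real.log_le_sub_one_of_pos (div_pos hx hy)
  rw [Real.log_div hx.ne' hy.ne'] at hlog
  calc c * Real.log x - c * Real.log y = c * (Real.log x - Real.log y) := by ring
    _ ≤ c * (x / y - 1) := by gcongr
    _ = c / y * (x - y) := by field_simp

section NegLogLik

variable {d m : ℕ} {A : Fin m → Matrix (Fin d) (Fin d) ℂ} {f : Fin m → ℝ}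

variable (A f) in
noncomputable def negLogLikGrad (ρ : Matrix (Fin d) (Fin d) ℂ) : Matrix (Fin d) (Fin d) ℂ :=
  -∑ i, (f i / ((A i * ρ).trace).re) • A i

lemma re_trace_negLogLikGrad_mul (ρ σ : Matrix (Fin d) (Fin d) ℂ) :
    (negLogLikGrad A f ρ * σ).trace.re = -∑ i, f i / (A i * ρ).trace.re * (A i * σ).trace.re := by
  simp only [negLogLikGrad, neg_mul, trace_neg, Complex.neg_re, Finset.sum_mul, trace_sum,
    Complex.re_sum, smul_mul, trace_smul, Complex.real_smul, Complex.re_ofReal_mul]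

lemma negLogLik_le_add_re_trace_negLogLikGrad_mul_sub (hf : ∀ i, 0 ≤ f i)
    {ρ₀ ρ : Matrix (Fin d) (Fin d) ℂ} (hρ₀ : ∀ i, 0 < f i → 0 < (A i * ρ₀).trace.re)
    (hρ : ∀ i, 0 < f i → 0 < (A i * ρ).trace.re) :
    negLogLik A f ρ₀ ≤ negLogLik A f ρ + (negLogLikGrad A f ρ₀ * (ρ₀ - ρ)).trace.re := by
  have htangent := Finset.sum_le_sum fun i (_ : i ∈ Finset.univ) =>
    mul_log_sub_mul_log_le (hf i) (hρ i) (hρ₀ i)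
  simp only [mul_sub, Finset.sum_sub_distrib] at htangent
  simp only [negLogLik, re_trace_negLogLikGrad_mul, mul_sub, trace_sub, Complex.sub_re]
  linarith

end NegLogLik

theorem suboptimality_bound_general {d m : ℕ}
    (A : Fin m → Matrix (Fin d) (Fin d) ℂ) (f : Fin m → ℝ)
    (hf : ∀ i, 0 ≤ f i)
    (ρt : Matrix (Fin d) (Fin d) ℂ)
    (hρtpos : ∀ i, 0 < f i → 0 < ((A i * ρt).trace).re)
    (G : Matrix (Fin d) (Fin d) ℂ)
    (hGdef : G = -∑ i, (f i / ((A i * ρt).trace).re) • A i)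
    (hG : G.IsHermitian)
    (μ : ℝ) (hμ : μ = max 0 (-(⨅ j, hG.eigenvalues j))) :
    ∀ ρ : Matrix (Fin d) (Fin d) ℂ, ρ.PosSemidef → ρ.trace = 1 →
      (∀ i, 0 < f i → 0 < ((A i * ρ).trace).re) →
      negLogLik A f ρt ≤ negLogLik A f ρ + ((G * ρt).trace).re + μ := by
  intro ρ hρ hρtr hρpos
  have hconvex := negLogLik_le_add_re_trace_negLogLikGrad_mul_sub hf hρtpos hρpos
  rw [negLogLikGrad, ← hGdef, mul_sub, trace_sub, Complex.sub_re] at hconvex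
  have hmin : (⨅ j, hG.eigenvalues j) ≤ (G * ρ).trace.re := by
    simpa [hρtr] using re_trace_mul_ge_of_algebraMap_le hG.algebraMap_iInf_eigenvalues_le hρ
  have hμ_ge : -(⨅ j, hG.eigenvalues j) ≤ μ := hμ ▸ le_max_right _ _
  linarith

/-- Proposition (a posteriori suboptimality bound): for any feasible density matrix
`ρ̃`, with `G = ∇L(ρ̃) = −Σ_i (f_i / Re(tr(A_i ρ̃)))·A_i` and
`μ = max(0, −λ_min(G))`, every feasible density matrix `ρ` satisfies
`L(ρ̃) ≤ L(ρ) + Re(tr(G ρ̃)) + μ`. -/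
theorem suboptimality_bound {d m : ℕ} (hd : 1 ≤ d) (hm : 1 ≤ m)
    (A : Fin m → Matrix (Fin d) (Fin d) ℂ) (f : Fin m → ℝ)
    (hA : ∀ i, (A i).PosSemidef) (hf : ∀ i, 0 ≤ f i)
    (ρt : Matrix (Fin d) (Fin d) ℂ) (hρt : ρt.PosSemidef) (hρttr : ρt.trace = 1)
    (hρtpos : ∀ i, 0 < f i → 0 < ((A i * ρt).trace).re)
    (G : Matrix (Fin d) (Fin d) ℂ)
    (hGdef : G = -∑ i, (f i / ((A i * ρt).trace).re) • A i)
    (hG : G.IsHermitian)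
    (μ : ℝ) (hμ : μ = max 0 (-(⨅ j, hG.eigenvalues j))) :
    ∀ ρ : Matrix (Fin d) (Fin d) ℂ, ρ.PosSemidef → ρ.trace = 1 →
      (∀ i, 0 < f i → 0 < ((A i * ρ).trace).re) →
      negLogLik A f ρt ≤ negLogLik A f ρ + ((G * ρt).trace).re + μ :=
  suboptimality_bound_general A f hf ρt hρtpos G hGdef hG μ hμ
end

section
/- Theorem (Burer–Monteiro local minima yield rank-constrained local minima): Fix r with 1 ≤ r ≤ d. Let U⋆ be a d × r complex matrix with ‖U⋆‖_F² = Re(tr(U⋆ᴴ U⋆)) = 1 and Re(tr(U⋆ᴴ A_i U⋆)) > 0 for every i with f_i > 0. If U⋆ is a local minimizer of J on the set {U ∈ ℂ^{d×r} : Re(tr(Uᴴ U)) = 1}, then ρ⋆ = U⋆ U⋆ᴴ is a local minimizer of L on the set {ρ : ρ Hermitian PSD, tr(ρ) = 1, rank(ρ) ≤ r}. -/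
/-!
Since `J(U) = L(U Uᴴ)` and `tr (Uᴴ U) = tr (U Uᴴ)`, both the objective and the sphere factor
through `φ U = U Uᴴ`, and every density matrix of rank at most `r` lies in the `φ`-image of the
sphere. The fibre of `φ` over `U⋆ U⋆ᴴ` is the orbit `U⋆ · U(r)`, and right multiplication by a
unitary preserves `J` and the sphere, so every point of that fibre is again a local minimizer.
If `ρ⋆` were not a local minimizer, points `φ V` with `J V < J U⋆` would accumulate at `ρ⋆`; by
compactness of the sphere the `V` would accumulate at a point of the fibre, contradicting its
local minimality.
-/

open Matrix BigOperators ComplexOrder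

/-- Factored (Burer–Monteiro) objective `J(U) = −Σ_i f_i · log(Re(tr(Uᴴ A_i U)))`. -/
noncomputable def facObj {d r m : ℕ} (A : Fin m → Matrix (Fin d) (Fin d) ℂ)
    (f : Fin m → ℝ) (U : Matrix (Fin d) (Fin r) ℂ) : ℝ :=
  -∑ i, f i * Real.log ((Uᴴ * A i * U).trace.re)

open Set Filter Topology
open scoped InnerProductSpace

theorem IsLocalMinOn.of_comp_eq_self {X β : Type*} [TopologicalSpace X] [Preorder β]
    {F : X → β} {S : Set X} {x₀ x : X} (h : IsLocalMinOn F S x₀) {e : X → X}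
    (he : Continuous e) (heS : MapsTo e S S) (hF : F ∘ e = F) (hx : e x = x₀) :
    IsLocalMinOn F S x := by
  have := IsMinFilter.comp_tendsto (hx ▸ h) (he.continuousWithinAt.tendsto_nhdsWithin heS)
  rwa [hF] at this

theorem isLocalMinOn_of_isCompact_of_forall_fiber {X Y β : Type*} [TopologicalSpace X]
    [TopologicalSpace Y] [T2Space Y] [LinearOrder β] {φ : X → Y} {g : Y → β} {S : Set X}
    {T : Set Y} {x₀ : X} (hφ : Continuous φ) (hS : IsCompact S) (hT : T ⊆ φ '' S)
    (hfiber : ∀ x ∈ S, φ x = φ x₀ → IsLocalMinOn (g ∘ φ) S x) : IsLocalMinOn g T (φ x₀) := by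
  set bad := {x ∈ S | g (φ x) < g (φ x₀)}
  have hbad : bad ⊆ S := sep_subset _ _
  have hK : IsCompact (φ '' (S ∩ closure bad)) := (hS.inter_right isClosed_closure).image hφ
  have hnot : φ x₀ ∉ φ '' (S ∩ closure bad) := by
    rintro ⟨x, ⟨hxS, hxbad⟩, hx⟩
    have : (𝓝[bad] x).NeBot := mem_closure_iff_nhdsWithin_neBot.mp hxbad
    obtain ⟨y, hy, hybad⟩ := (((hfiber x hxS hx).filter_mono
      (nhdsWithin_mono x hbad)).and self_mem_nhdsWithin).exists
    exact (hy.trans_lt hybad.2).ne (congrArg g hx)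
  filter_upwards [nhdsWithin_le_nhds (hK.isClosed.isOpen_compl.mem_nhds hnot),
    self_mem_nhdsWithin] with y hyK hyT
  obtain ⟨x, hxS, rfl⟩ := hT hyT
  exact not_lt.mp fun hlt => hyK ⟨x, ⟨hxS, subset_closure ⟨hxS, hlt⟩⟩, rfl⟩

theorem LinearMap.exists_linearIsometryEquiv_comp_eq {𝕜 E F : Type*} [RCLike 𝕜]
    [NormedAddCommGroup E] [InnerProductSpace 𝕜 E] [NormedAddCommGroup F] [InnerProductSpace 𝕜 F]
    [FiniteDimensional 𝕜 F] (u v : E →ₗ[𝕜] F) (h : ∀ x, ‖v x‖ = ‖u x‖) :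
    ∃ W : F ≃ₗᵢ[𝕜] F, ∀ x, W (u x) = v x := by
  have hker : LinearMap.ker u ≤ LinearMap.ker v := fun x hx => by
    simpa [← norm_eq_zero, h x] using hx
  set L : LinearMap.range u →ₗ[𝕜] F := (LinearMap.ker u).liftQ v hker ∘ₗ u.quotKerEquivRange.symm
  have hL : ∀ x, L ⟨u x, LinearMap.mem_range_self u x⟩ = v x := fun x => by
    simp [L, LinearMap.quotKerEquivRange_symm_apply_image]
  let L' : LinearMap.range u →ₗᵢ[𝕜] F := ⟨L, by
    rintro ⟨_, x, rfl⟩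
    rw [hL, h]
    rfl⟩
  exact ⟨L'.extend.toLinearIsometryEquiv rfl,
    fun x => (L'.extend_apply ⟨u x, LinearMap.mem_range_self u x⟩).trans (hL x)⟩

namespace Matrix

section frobenius

attribute [local instance] frobeniusNormedAddCommGroup frobeniusNormedSpace

theorem frobenius_norm_sq_eq_re_trace {m n : Type*} [Fintype m] [Fintype n]
    (U : Matrix m n ℂ) : ‖U‖ ^ 2 = (Uᴴ * U).trace.re := by
  rw [frobenius_norm_def, ← Real.rpow_natCast, ← Real.rpow_mul (by positivity)]
  simp only [trace, diag_apply, mul_apply, conjTranspose_apply, Complex.re_sum]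
  rw [Finset.sum_comm]
  simp [Complex.sq_norm, Complex.normSq_apply]

theorem isCompact_setOf_re_trace_conjTranspose_mul_self_eq_one {m n : Type*} [Fintype m]
    [Fintype n] : IsCompact {U : Matrix m n ℂ | (Uᴴ * U).trace.re = 1} := by
  have : {U : Matrix m n ℂ | (Uᴴ * U).trace.re = 1} = Metric.sphere 0 1 := Set.ext fun U => by
    rw [mem_sphere_zero_iff_norm, ← pow_eq_one_iff_of_nonneg (norm_nonneg U) two_ne_zero,
      frobenius_norm_sq_eq_re_trace]
    rfl
  exact this ▸ isCompact_sphere 0 1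

end frobenius

theorem exists_mul_conjTranspose_eq_diagonal {n ι : Type*} [Fintype n] [DecidableEq n]
    [Fintype ι] {μ : n → ℝ} (hμ : ∀ i, 0 ≤ μ i)
    (hcard : Fintype.card {i // μ i ≠ 0} ≤ Fintype.card ι) :
    ∃ B : Matrix n ι ℂ, B * Bᴴ = diagonal fun i => (μ i : ℂ) := by
  classical
  obtain ⟨e⟩ := Function.Embedding.nonempty_of_card_le hcard
  refine ⟨of fun i k => if h : μ i = 0 then 0 else if e ⟨i, h⟩ = k then (√(μ i) : ℂ) else 0, ?_⟩
  ext i j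
  obtain rfl | hij := eq_or_ne i j
  · by_cases hi : μ i = 0
    · simp [mul_apply, hi]
    · simp [mul_apply, hi, ← Complex.ofReal_mul, Real.mul_self_sqrt (hμ i)]
  · by_cases hi : μ i = 0
    · simp [mul_apply, hi, hij]
    by_cases hj : μ j = 0
    · simp [mul_apply, hj, hij]
    simp [mul_apply, hi, hj, hij, hij.symm, ite_mul, e.injective.eq_iff]

theorem PosSemidef.exists_eq_mul_conjTranspose_of_rank_le {n ι : Type*} [Fintype n]
    [DecidableEq n] [Fintype ι] {ρ : Matrix n n ℂ} (hρ : ρ.PosSemidef)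
    (hrk : ρ.rank ≤ Fintype.card ι) : ∃ V : Matrix n ι ℂ, ρ = V * Vᴴ := by
  obtain ⟨B, hB⟩ := exists_mul_conjTranspose_eq_diagonal hρ.eigenvalues_nonneg
    (hρ.1.rank_eq_card_non_zero_eigs ▸ hrk)
  refine ⟨(hρ.1.eigenvectorUnitary : Matrix n n ℂ) * B, ?_⟩
  conv_lhs => rw [hρ.1.spectral_theorem]
  rw [Unitary.conjStarAlgAut_apply, conjTranspose_mul, ← Matrix.mul_assoc,
    Matrix.mul_assoc _ B, hB, star_eq_conjTranspose]
  rfl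

theorem norm_toEuclideanLin_conjTranspose_sq {𝕜 m n : Type*} [RCLike 𝕜] [Fintype m] [Fintype n]
    [DecidableEq m] [DecidableEq n] (U : Matrix m n 𝕜) (x : EuclideanSpace 𝕜 m) :
    (‖toEuclideanLin Uᴴ x‖ ^ 2 : 𝕜) = ⟪x, toEuclideanLin (U * Uᴴ) x⟫_𝕜 := by
  rw [← inner_self_eq_norm_sq_to_K, toLpLin_mul_same, toEuclideanLin_conjTranspose_eq_adjoint,
    LinearMap.adjoint_inner_left]
  rfl

theorem exists_mem_unitaryGroup_of_mul_conjTranspose_eq {m n : Type*} [Fintype m] [Fintype n]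
    [DecidableEq m] [DecidableEq n] {U V : Matrix m n ℂ} (h : V * Vᴴ = U * Uᴴ) :
    ∃ W ∈ unitaryGroup n ℂ, V = U * W := by
  obtain ⟨W, hW⟩ := LinearMap.exists_linearIsometryEquiv_comp_eq (toEuclideanLin Uᴴ)
    (toEuclideanLin Vᴴ) fun x => by
      have := norm_toEuclideanLin_conjTranspose_sq V x
      rw [h, ← norm_toEuclideanLin_conjTranspose_sq] at this
      exact (sq_eq_sq₀ (norm_nonneg _) (norm_nonneg _)).mp (by exact_mod_cast this)
  set b := EuclideanSpace.basisFun n ℂ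
  set M := W.toLinearEquiv.toLinearMap.toMatrix b.toBasis b.toBasis
  have hM : toEuclideanLin M = W := toLin_toMatrix b.toBasis b.toBasis _
  have hVU : Vᴴ = M * Uᴴ := toEuclideanLin.injective <| by
    ext x : 1
    simp [hM, hW]
  refine ⟨Mᴴ, Unitary.star_mem (W.toMatrix_mem_unitaryGroup b b), ?_⟩
  rw [← conjTranspose_conjTranspose V, hVU, conjTranspose_mul, conjTranspose_conjTranspose]

theorem mul_mul_conjTranspose_of_mem_unitaryGroup {m n : Type*} [Fintype n] [DecidableEq n]
    (X : Matrix m n ℂ) {W : Matrix n n ℂ} (hW : W ∈ unitaryGroup n ℂ) :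
    X * W * (X * W)ᴴ = X * Xᴴ := by
  rw [conjTranspose_mul, Matrix.mul_assoc, ← Matrix.mul_assoc W, ← star_eq_conjTranspose,
    mem_unitaryGroup_iff.mp hW, Matrix.one_mul]

end Matrix

theorem facObj_eq_negLogLik {d r m : ℕ} (A : Fin m → Matrix (Fin d) (Fin d) ℂ) (f : Fin m → ℝ)
    (U : Matrix (Fin d) (Fin r) ℂ) : facObj A f U = negLogLik A f (U * Uᴴ) := by
  simp only [facObj, negLogLik, ← Matrix.mul_assoc, trace_mul_comm (A _ * U)]

theorem bm_local_min_transfer_general {d m : ℕ} (r : ℕ)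
    (A : Fin m → Matrix (Fin d) (Fin d) ℂ) (f : Fin m → ℝ)
    (Ustar : Matrix (Fin d) (Fin r) ℂ)
    (hloc : IsLocalMinOn (facObj A f)
      {U : Matrix (Fin d) (Fin r) ℂ | ((Uᴴ * U).trace).re = 1} Ustar) :
    IsLocalMinOn (negLogLik A f)
      {ρ : Matrix (Fin d) (Fin d) ℂ | ρ.PosSemidef ∧ ρ.trace = 1 ∧ ρ.rank ≤ r}
      (Ustar * Ustarᴴ) := by
  have hJ : facObj A f = negLogLik A f ∘ fun U : Matrix (Fin d) (Fin r) ℂ => U * Uᴴ :=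
    funext (facObj_eq_negLogLik A f)
  have htrace : ∀ U : Matrix (Fin d) (Fin r) ℂ, (Uᴴ * U).trace = (U * Uᴴ).trace :=
    fun U => trace_mul_comm _ _
  rw [hJ] at hloc
  refine isLocalMinOn_of_isCompact_of_forall_fiber (φ := fun U => U * Uᴴ) (x₀ := Ustar)
    (by fun_prop) isCompact_setOf_re_trace_conjTranspose_mul_self_eq_one ?_ ?_
  · rintro ρ ⟨hρ, htr, hrk⟩
    obtain ⟨V, rfl⟩ := hρ.exists_eq_mul_conjTranspose_of_rank_le (ι := Fin r) (by simpa using hrk)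
    exact ⟨V, by simp [htrace, htr], rfl⟩
  · intro X _ hX
    obtain ⟨W, hW, rfl⟩ := exists_mem_unitaryGroup_of_mul_conjTranspose_eq hX.symm
    have hφW : ∀ U : Matrix (Fin d) (Fin r) ℂ, U * W * (U * W)ᴴ = U * Uᴴ :=
      fun U => mul_mul_conjTranspose_of_mem_unitaryGroup U hW
    refine hloc.of_comp_eq_self (e := fun U : Matrix (Fin d) (Fin r) ℂ => U * W) (by fun_prop)
      (fun U hU => ?_) (funext fun U => congrArg (negLogLik A f) (hφW U)) rfl
    show ((U * W)ᴴ * (U * W)).trace.re = 1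
    rwa [htrace, hφW, ← htrace]

/-- Theorem: a local minimizer `U⋆` of `J` on the unit Frobenius sphere yields a
local minimizer `ρ⋆ = U⋆ U⋆ᴴ` of `L` on the set of density matrices of rank at
most `r`. -/
theorem bm_local_min_transfer {d m : ℕ} (r : ℕ) (hr : 1 ≤ r) (hrd : r ≤ d)
    (hm : 1 ≤ m)
    (A : Fin m → Matrix (Fin d) (Fin d) ℂ) (f : Fin m → ℝ)
    (hA : ∀ i, (A i).PosSemidef) (hf : ∀ i, 0 ≤ f i)
    (Ustar : Matrix (Fin d) (Fin r) ℂ)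
    (hnorm : ((Ustarᴴ * Ustar).trace).re = 1)
    (hpos : ∀ i, 0 < f i → 0 < ((Ustarᴴ * A i * Ustar).trace).re)
    (hloc : IsLocalMinOn (facObj A f)
      {U : Matrix (Fin d) (Fin r) ℂ | ((Uᴴ * U).trace).re = 1} Ustar) :
    IsLocalMinOn (negLogLik A f)
      {ρ : Matrix (Fin d) (Fin d) ℂ | ρ.PosSemidef ∧ ρ.trace = 1 ∧ ρ.rank ≤ r}
      (Ustar * Ustarᴴ) :=
  bm_local_min_transfer_general r A f Ustar hloc
end
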